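/- Let ε ∈ [0,1] and let (X_n)_{n≥0} be a stochastic process with values in A = {0,1,2} compatible with (τ_qua, p_qua), and suppose P(X_0 = 1, X_1 = 1) = 0 and P(X_1 = 1, X_2 = 1) = 0. Then P(X_n = 1, X_{n+1} = 1) = 0 for every n ≥ 0; that is, the string 11 almost surely never occurs in the chain. -/

import Mathlib

open MeasureTheory

/-- The quaternary context tree τ_qua = {000, 100, 200, 10, 20, 01, 21, 2}, where the
string "01" denotes the list [0, 1]. -/
def tauQua : Finset (List (Fin 3)) :=
  {[0,0,0], [1,0,0], [2,0,0], [1,0], [2,0], [0,1], [2,1], [2]}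

/-- The family of transition probabilities p_qua of the Quaternary chain:
p(0|2) = ε, p(1|2) = 1−ε; p(0|21) = 1; p(0|20) = 1; p(0|10) = ε, p(1|10) = 1−ε;
p(2|01) = 1; p(0|200) = ε, p(1|200) = 1−ε; p(2|100) = 1; p(2|000) = 1
(all unlisted entries are 0). -/
noncomputable def pQua (ε : ℝ) (w : List (Fin 3)) (a : Fin 3) : ℝ :=
  if w = [2] then (if a = 0 then ε else if a = 1 then 1 - ε else 0)
  else if w = [2,1] then (if a = 0 then 1 else 0)
  else if w = [2,0] then (if a = 0 then 1 else 0)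
  else if w = [1,0] then (if a = 0 then ε else if a = 1 then 1 - ε else 0)
  else if w = [0,1] then (if a = 2 then 1 else 0)
  else if w = [2,0,0] then (if a = 0 then ε else if a = 1 then 1 - ε else 0)
  else if w = [1,0,0] then (if a = 2 then 1 else 0)
  else if w = [0,0,0] then (if a = 2 then 1 else 0)
  else 0

/-- A stochastic process (X_n) with values in {0,1,2} is compatible with
(τ_qua, p_qua): for every n ≥ 3 and every string x_0⋯x_{n-1} with
P(X_0 = x_0, …, X_{n-1} = x_{n-1}) > 0 and such that the context c(x_0⋯x_{n-1}) is
defined (i.e. the last two symbols are not (1,1)), one has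
P(X_n = a | X_0 = x_0, …, X_{n-1} = x_{n-1}) = p_qua(a | c(x_0⋯x_{n-1})) for all a. -/
def CompatibleQua {Ω : Type*} [MeasurableSpace Ω] (μ : Measure Ω)
    (X : ℕ → Ω → Fin 3) (ε : ℝ) (c : List (Fin 3) → List (Fin 3)) : Prop :=
  ∀ n : ℕ, 3 ≤ n → ∀ x : ℕ → Fin 3,
    ¬ ([1,1] <:+ (List.range n).map x) →
    0 < μ {ω | ∀ i < n, X i ω = x i} →
    ∀ a : Fin 3,
      μ ({ω | X n ω = a} ∩ {ω | ∀ i < n, X i ω = x i}) =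
        ENNReal.ofReal (pQua ε (c ((List.range n).map x)) a) *
          μ {ω | ∀ i < n, X i ω = x i}

/-- for ε ∈ [0,1] and (X_n) compatible with (τ_qua, p_qua), if
P(X_0 = 1, X_1 = 1) = 0 and P(X_1 = 1, X_2 = 1) = 0, then
P(X_n = 1, X_{n+1} = 1) = 0 for every n ≥ 0: the string 11 a.s. never occurs. -/
theorem stmt7 {Ω : Type*} [MeasurableSpace Ω] (μ : Measure Ω) [IsProbabilityMeasure μ]
    (X : ℕ → Ω → Fin 3) (hX : ∀ n, Measurable (X n))
    (ε : ℝ) (hε0 : 0 ≤ ε) (hε1 : ε ≤ 1)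
    (c : List (Fin 3) → List (Fin 3))
    (hc : ∀ v : List (Fin 3), 3 ≤ v.length → ¬ ([1,1] <:+ v) →
      c v ∈ tauQua ∧ c v <:+ v)
    (hcompat : CompatibleQua μ X ε c)
    (h01 : μ {ω | X 0 ω = 1 ∧ X 1 ω = 1} = 0)
    (h12 : μ {ω | X 1 ω = 1 ∧ X 2 ω = 1} = 0) :
    ∀ n : ℕ, μ {ω | X n ω = 1 ∧ X (n+1) ω = 1} = 0 := by
  intro n
  induction n using Nat.strong_induction_on with
  | _ n ih =>
    match n, ih with
    | 0, _ => exact h01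
    | 1, _ => exact h12
    | (m+2), ih =>
      have hIH : μ {ω | X (m+1) ω = 1 ∧ X (m+2) ω = 1} = 0 := ih (m+1) (by omega)
      set k := m + 2 with hk
      have hsub : {ω | X k ω = 1 ∧ X (k+1) ω = 1} ⊆
          ⋃ y : Fin (k+1) → Fin 3,
            ({ω | X k ω = 1 ∧ X (k+1) ω = 1} ∩
              {ω | ∀ i < k+1, X i ω = (fun j => if h : j < k+1 then y ⟨j, h⟩ else 0) i}) := by
        intro ω hω
        refine Set.mem_iUnion.2 ⟨fun i => X i.val ω, hω, ?_⟩
        intro i hi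
        simp [hi]
      refine measure_mono_null hsub (measure_iUnion_null fun y => ?_)
      set x : ℕ → Fin 3 := fun j => if h : j < k+1 then y ⟨j, h⟩ else 0 with hx
      by_cases hyk : x k = 1
      · by_cases hykm : x (m+1) = 1
        · refine measure_mono_null ?_ hIH
          rintro ω ⟨⟨h1, _⟩, hcyl⟩
          refine ⟨?_, h1⟩
          rw [hcyl (m+1) (by omega)]; exact hykm
        · set v := (List.range (k+1)).map x with hv
          have hvsplit : v = (List.range m).map x ++ [x m, x (m+1), x (m+2)] := by
            simp [hv, hk, List.range_succ, List.map_append]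
          have htail : [x (m+1), x (m+2)] <:+ v :=
            ⟨(List.range m).map x ++ [x m], by simp [hvsplit]⟩
          have hno11 : ¬ ([1,1] <:+ v) := by
            intro h
            rcases List.suffix_or_suffix_of_suffix h htail with h' | h'
            · have he := h'.eq_of_length (by simp)
              have : (1 : Fin 3) = x (m+1) := by
                have := congrArg (fun l => l.head?) he
                simpa using this
              exact hykm this.symm
            · have he := h'.eq_of_length (by simp)
              have : x (m+1) = (1 : Fin 3) := by
                have := congrArg (fun l => l.head?) he
                simpa using this
              exact hykm this
          by_cases hpos : 0 < μ {ω | ∀ i < k+1, X i ω = x i}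
          · have hcomp := hcompat (k+1) (by omega) x hno11 hpos 1
            obtain ⟨hmem, hsuf⟩ := hc v (by simp [hv]; omega) hno11
            have hlast : v.getLast? = some 1 := by
              rw [hvsplit, List.getLast?_append_of_ne_nil _ (by simp)]
              simpa using hyk
            have hclast : (c v).getLast? = some 1 := by
              obtain ⟨t, ht⟩ := hsuf
              have hne : c v ≠ [] := by
                intro h0
                simp [tauQua, h0] at hmem
              rw [← ht, List.getLast?_append_of_ne_nil _ hne] at hlast
              exact hlast
            have hp0 : pQua ε (c v) 1 = 0 := by
              simp only [tauQua, Finset.mem_insert, Finset.mem_singleton] at hmem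
              rcases hmem with h|h|h|h|h|h|h|h <;>
                first
                  | (rw [h] at hclast; exact absurd hclast (by decide))
                  | (rw [h]; simp [pQua])
            have hkey : μ ({ω | X (k+1) ω = 1} ∩ {ω | ∀ i < k+1, X i ω = x i}) = 0 := by
              rw [hcomp, hp0]; simp
            refine measure_mono_null ?_ hkey
            rintro ω ⟨⟨_, h2⟩, hcyl⟩
            exact ⟨h2, hcyl⟩
          · have h0 : μ {ω | ∀ i < k+1, X i ω = x i} = 0 := by
              by_contra h
              exact hpos (pos_iff_ne_zero.mpr h)
            exact measure_mono_null (fun ω hω => hω.2) h0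
      · refine measure_mono_null ?_ (measure_empty (μ := μ))
        rintro ω ⟨⟨h1, _⟩, hcyl⟩
        exact hyk (by rw [← hcyl k (by omega)]; exact h1)
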